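/- Every commutative associative bilinear multiplication · on the Virasoro algebra Vir satisfying the compatibility condition 2 z·[x,y] = [z·x, y] + [x, z·y] for all x, y, z ∈ Vir is identically zero; i.e., there are no non-trivial transposed Poisson algebra structures on the Virasoro algebra. -/

import Mathlib

/-- The underlying space of the Virasoro algebra, with basis
`L n = single (some n) 1` for `n : ℤ` and central charge `c = single none 1`. -/
abbrev Vir : Type := Option ℤ →₀ ℂ

/-- The Virasoro bracket on basis elements:
`[L m, L n] = (m-n) L (m+n) + ((m³-m)/12) δ_{m+n,0} c`, and `c` is central. -/
noncomputable def virBasic : Option ℤ → Option ℤ → Vir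
  | some m, some n =>
      ((m : ℂ) - (n : ℂ)) • Finsupp.single (some (m + n)) (1 : ℂ) +
      (if m + n = 0 then (((m : ℂ) ^ 3 - (m : ℂ)) / 12) else 0) •
        Finsupp.single (none : Option ℤ) (1 : ℂ)
  | _, _ => 0

/-- The Virasoro Lie bracket, extended bilinearly from basis elements. -/
noncomputable def virBracket (f g : Vir) : Vir :=
  f.sum fun p c => g.sum fun q d => (c * d) • virBasic p q

/-!
By the compatibility condition every left multiplication `z · _` is a ½-derivation of Vir.
Comparing coefficients of the ½-derivation identity on `L m, L n` shows, as for the Witt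
algebra, that `D (L n)` is essentially `∑ₜ aₜ L (n + t)`; the central terms of the same identity
then force `aₜ = 0` for `t ≠ 0`, so every ½-derivation is a scalar. Hence `z · w = λ z • w`,
and commutativity, `λ z • w = λ w • z`, forces `λ = 0`.
-/

theorem Finsupp.eq_zero_of_smul_comm {ι R : Type*} [Semiring R] {a b : ι} (hab : a ≠ b)
    (f : (ι →₀ R) → R) (h : ∀ x y, f x • y = f y • x) : f = 0 := by
  have ha : f (single a 1) = 0 := by
    simpa [hab] using congr($(h (single a 1) (single b 1)) b)
  funext z
  simpa [ha] using congr($(h z (single a 1)) a)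

namespace Vir

noncomputable def L (n : ℤ) : Vir := Finsupp.single (some n) 1

noncomputable def c : Vir := Finsupp.single none 1

@[simp]
lemma L_apply_none (n : ℤ) : L n none = 0 := by
  simp [L]

lemma L_apply_some (n k : ℤ) : L n (some k) = if k = n then 1 else 0 := by
  simp [L, Finsupp.single_apply, eq_comm]

@[simp]
lemma c_apply_none : c none = 1 := by
  simp [c]

@[simp]
lemma c_apply_some (k : ℤ) : c (some k) = 0 := by
  simp [c]

end Vir

open Vir

lemma virBasic_swap (p q : Option ℤ) : virBasic q p = -virBasic p q := by
  rcases p with _ | m <;> rcases q with _ | n <;> simp only [virBasic, neg_zero]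
  by_cases h : m + n = 0
  · obtain rfl : n = -m := by omega
    simp only [neg_add_cancel, add_neg_cancel, if_true, Int.cast_neg]
    rw [neg_add, ← neg_smul, ← neg_smul]
    congr 2 <;> ring
  · rw [if_neg h, if_neg (by omega), add_comm n m, neg_add, ← neg_smul]
    congr 2 <;> simp

lemma virBasic_apply_some (m j k : ℤ) :
    virBasic (some m) (some j) (some k) = if m + j = k then (m : ℂ) - j else 0 := by
  simp only [virBasic, Finsupp.add_apply, Finsupp.smul_apply, Finsupp.single_apply,
    Option.some.injEq, reduceCtorEq, if_false, smul_eq_mul, mul_ite, mul_one, mul_zero, add_zero]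

lemma virBasic_apply_none (m j : ℤ) :
    virBasic (some m) (some j) none = if m + j = 0 then ((m : ℂ) ^ 3 - m) / 12 else 0 := by
  simp only [virBasic, Finsupp.add_apply, Finsupp.smul_apply, Finsupp.single_apply,
    reduceCtorEq, if_false, if_true, smul_eq_mul, mul_one, mul_zero, zero_add]

lemma virBracket_comm (f g : Vir) : virBracket g f = -virBracket f g := by
  unfold virBracket
  rw [Finsupp.sum_comm, ← Finsupp.sum_neg]
  refine Finsupp.sum_congr fun p _ => ?_
  rw [← Finsupp.sum_neg]
  refine Finsupp.sum_congr fun q _ => ?_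
  rw [virBasic_swap, smul_neg, mul_comm]

lemma virBracket_single_left (p : Option ℤ) (a : ℂ) (f : Vir) :
    virBracket (Finsupp.single p a) f = f.sum fun q d => (a * d) • virBasic p q :=
  Finsupp.sum_single_index (by simp)

lemma virBracket_c_left (f : Vir) : virBracket c f = 0 := by
  simp [c, virBracket_single_left, virBasic]

lemma virBracket_c_right (f : Vir) : virBracket f c = 0 := by
  rw [virBracket_comm, virBracket_c_left, neg_zero]

lemma virBracket_L_L (m n : ℤ) : virBracket (L m) (L n) =
    ((m : ℂ) - n) • L (m + n) + (if m + n = 0 then ((m : ℂ) ^ 3 - m) / 12 else 0) • c := by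
  simp [L, c, virBracket_single_left, virBasic]

lemma virBracket_L_left_apply_some (m k : ℤ) (f : Vir) :
    virBracket (L m) f (some k) = (2 * m - k) * f (some (k - m)) := by
  rw [L, virBracket_single_left, Finsupp.sum_apply, Finsupp.sum_eq_single (some (k - m))]
  · simp only [one_mul, Finsupp.smul_apply, smul_eq_mul, virBasic_apply_some,
      add_sub_cancel, if_true]
    push_cast
    ring
  · rintro (_ | j) - hj
    · simp [virBasic]
    · have : m + j ≠ k := fun h => hj (by rw [← h]; simp)
      simp [virBasic_apply_some, this]
  · simp

lemma virBracket_L_left_apply_none (m : ℤ) (f : Vir) :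
    virBracket (L m) f none = ((m : ℂ) ^ 3 - m) / 12 * f (some (-m)) := by
  rw [L, virBracket_single_left, Finsupp.sum_apply, Finsupp.sum_eq_single (some (-m))]
  · simp only [one_mul, Finsupp.smul_apply, smul_eq_mul, virBasic_apply_none,
      add_neg_cancel, if_true]
    ring
  · rintro (_ | j) - hj
    · simp [virBasic]
    · have : m + j ≠ 0 := fun h => hj (by rw [show j = -m by omega])
      simp [virBasic_apply_none, this]
  · simp

lemma virBracket_L_right_apply_some (n k : ℤ) (f : Vir) :
    virBracket f (L n) (some k) = (k - 2 * n) * f (some (k - n)) := by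
  rw [virBracket_comm, Finsupp.neg_apply, virBracket_L_left_apply_some]
  ring

lemma virBracket_L_right_apply_none (n : ℤ) (f : Vir) :
    virBracket f (L n) none = ((n : ℂ) - n ^ 3) / 12 * f (some (-n)) := by
  rw [virBracket_comm, Finsupp.neg_apply, virBracket_L_left_apply_none]
  ring

def IsHalfDerivation (D : Vir →ₗ[ℂ] Vir) : Prop :=
  ∀ x y : Vir, (2 : ℂ) • D (virBracket x y) = virBracket (D x) y + virBracket x (D y)

namespace IsHalfDerivation

variable {D : Vir →ₗ[ℂ] Vir} (hD : IsHalfDerivation D)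
include hD

lemma virBracket_L_apply_c (m : ℤ) : virBracket (L m) (D c) = 0 := by
  have h := hD (L m) c
  rwa [virBracket_c_right, virBracket_c_right, map_zero, smul_zero, zero_add, eq_comm] at h

lemma apply_c_apply_some (k : ℤ) : D c (some k) = 0 := by
  have h := congr($(hD.virBracket_L_apply_c (k + 1)) (some (2 * k + 1)))
  rw [virBracket_L_left_apply_some, show 2 * k + 1 - (k + 1) = k by ring,
    Finsupp.zero_apply] at h
  push_cast at h
  linear_combination h

lemma apply_virBracket_L_L_some (m n k : ℤ) :
    2 * ((m - n) * D (L (m + n)) (some k)) =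
      (k - 2 * n) * D (L m) (some (k - n)) + (2 * m - k) * D (L n) (some (k - m)) := by
  have h := congr($(hD (L m) (L n)) (some k))
  simp only [virBracket_L_L, map_add, map_smul, Finsupp.smul_apply, Finsupp.add_apply,
    smul_eq_mul, virBracket_L_right_apply_some, virBracket_L_left_apply_some,
    hD.apply_c_apply_some, mul_zero, add_zero] at h
  linear_combination h

lemma apply_virBracket_L_L_none (m n : ℤ) :
    2 * ((m - n) * D (L (m + n)) none +
        (if m + n = 0 then ((m : ℂ) ^ 3 - m) / 12 else 0) * D c none) =
      ((n : ℂ) - n ^ 3) / 12 * D (L m) (some (-n)) +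
        ((m : ℂ) ^ 3 - m) / 12 * D (L n) (some (-m)) := by
  have h := congr($(hD (L m) (L n)) none)
  simp only [virBracket_L_L, map_add, map_smul, Finsupp.smul_apply, Finsupp.add_apply,
    smul_eq_mul, virBracket_L_right_apply_none, virBracket_L_left_apply_none] at h
  linear_combination h

lemma apply_L_apply_some_of_ne {n k : ℤ} (hk : k ≠ 2 * n) :
    D (L n) (some k) = D (L 0) (some (k - n)) := by
  have h := hD.apply_virBracket_L_L_some 0 n k
  have hk' : (k : ℂ) - 2 * n ≠ 0 := sub_ne_zero.mpr (by exact_mod_cast hk)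
  simp only [zero_add, sub_zero, Int.cast_zero] at h
  exact mul_left_cancel₀ hk' (by linear_combination h)

lemma apply_L_apply_none_of_ne_zero {n : ℤ} (hn : n ≠ 0) :
    D (L n) none = ((n : ℂ) ^ 2 - 1) / 24 * D (L 0) (some (-n)) := by
  have h := hD.apply_virBracket_L_L_none 0 n
  have hn' : (n : ℂ) ≠ 0 := by exact_mod_cast hn
  rw [if_neg (by omega)] at h
  simp only [zero_add, Int.cast_zero, neg_zero] at h
  exact mul_left_cancel₀ (mul_ne_zero (by norm_num : (-2 : ℂ) ≠ 0) hn')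
    (by linear_combination h)

/- For the pair `(3t, -4t)` every coefficient in the central component reduces to
`D (L 0) (some t)`, leaving `7 t³ · D (L 0) (some t) = 0`. -/
lemma apply_L_zero_apply_some {t : ℤ} (ht : t ≠ 0) : D (L 0) (some t) = 0 := by
  have h := hD.apply_virBracket_L_L_none (3 * t) (-4 * t)
  have h₁ : D (L (3 * t)) (some (-(-4 * t))) = D (L 0) (some t) := by
    rw [hD.apply_L_apply_some_of_ne (by omega)]; congr 3; ring
  have h₂ : D (L (-4 * t)) (some (-(3 * t))) = D (L 0) (some t) := by
    rw [hD.apply_L_apply_some_of_ne (by omega)]; congr 3; ring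
  rw [show 3 * t + -4 * t = -t by ring, if_neg (by omega), h₁, h₂,
    hD.apply_L_apply_none_of_ne_zero (by omega), neg_neg] at h
  have ht' : (t : ℂ) ≠ 0 := by exact_mod_cast ht
  push_cast at h
  have h₇ : (7 * (t : ℂ) ^ 3) * D (L 0) (some t) = 0 := by linear_combination -h
  exact (mul_eq_zero.mp h₇).resolve_left (by simp [ht'])

lemma apply_L_apply_some_two_mul {n : ℤ} (hn : n ≠ 0) : D (L n) (some (2 * n)) = 0 := by
  have h := hD.apply_virBracket_L_L_some (2 * n) (-n) (2 * n)
  have h₁ : D (L (2 * n)) (some (2 * n - -n)) = 0 := by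
    rw [hD.apply_L_apply_some_of_ne (by omega), hD.apply_L_zero_apply_some (by omega)]
  have h₂ : D (L (-n)) (some (2 * n - 2 * n)) = 0 := by
    rw [hD.apply_L_apply_some_of_ne (by omega), hD.apply_L_zero_apply_some (by omega)]
  rw [h₁, h₂, show 2 * n + -n = n by ring] at h
  have hn' : (n : ℂ) ≠ 0 := by exact_mod_cast hn
  push_cast at h
  have h₆ : (6 * (n : ℂ)) * D (L n) (some (2 * n)) = 0 := by linear_combination h
  exact (mul_eq_zero.mp h₆).resolve_left (by simp [hn'])

lemma apply_L_apply_some (n k : ℤ) :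
    D (L n) (some k) = if k = n then D (L 0) (some 0) else 0 := by
  by_cases hk : k = 2 * n
  · by_cases hn : n = 0
    · subst hn; simp_all
    · rw [hk, hD.apply_L_apply_some_two_mul hn, if_neg (by omega)]
  · rw [hD.apply_L_apply_some_of_ne hk]
    split_ifs with hkn
    · rw [hkn, sub_self]
    · exact hD.apply_L_zero_apply_some (by omega)

lemma apply_L_apply_none (n : ℤ) : D (L n) none = 0 := by
  by_cases hn : n = 0
  · have h := hD.apply_virBracket_L_L_none 1 (-1)
    norm_num at h
    rwa [hn]
  · rw [hD.apply_L_apply_none_of_ne_zero hn, hD.apply_L_zero_apply_some (by omega), mul_zero]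

lemma apply_c_apply_none : D c none = D (L 0) (some 0) := by
  have h := hD.apply_virBracket_L_L_none 2 (-2)
  have h₁ : D (L 2) (some (-(-2))) = D (L 0) (some 0) := by
    rw [hD.apply_L_apply_some, if_pos (by norm_num)]
  have h₂ : D (L (-2)) (some (-2)) = D (L 0) (some 0) := by
    rw [hD.apply_L_apply_some, if_pos rfl]
  rw [h₁, h₂, show (2 : ℤ) + -2 = 0 by norm_num, hD.apply_L_apply_none, if_pos rfl] at h
  norm_num at h
  linear_combination h

lemma apply_L (n : ℤ) : D (L n) = D (L 0) (some 0) • L n := by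
  ext (_ | k) <;> rw [Finsupp.smul_apply, smul_eq_mul]
  · rw [hD.apply_L_apply_none, L_apply_none, mul_zero]
  · rw [hD.apply_L_apply_some, L_apply_some, mul_ite, mul_one, mul_zero]

lemma apply_c : D c = D (L 0) (some 0) • c := by
  ext (_ | k) <;> rw [Finsupp.smul_apply, smul_eq_mul]
  · rw [hD.apply_c_apply_none, c_apply_none, mul_one]
  · rw [hD.apply_c_apply_some, c_apply_some, mul_zero]

lemma exists_eq_smul_id : ∃ a : ℂ, D = a • LinearMap.id := by
  refine ⟨D (L 0) (some 0), Finsupp.lhom_ext fun p b => ?_⟩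
  rw [← mul_one b, ← smul_eq_mul, ← Finsupp.smul_single, map_smul, map_smul]
  rcases p with _ | n
  · exact congr(b • $(hD.apply_c))
  · exact congr(b • $(hD.apply_L n))

end IsHalfDerivation

theorem no_transposedPoisson_on_virasoro_general
    (m : Vir →ₗ[ℂ] Vir →ₗ[ℂ] Vir)
    (hcomm : ∀ x y : Vir, m x y = m y x)
    (hcompat : ∀ x y z : Vir, (2 : ℂ) • m z (virBracket x y) =
        virBracket (m z x) y + virBracket x (m z y)) :
    m = 0 := by
  choose lam hlam using fun z => IsHalfDerivation.exists_eq_smul_id fun x y => hcompat x y z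
  have hlam_zero : lam = 0 :=
    Finsupp.eq_zero_of_smul_comm (by simp : (some 0 : Option ℤ) ≠ some 1) lam fun x y => by
      simpa [hlam] using hcomm x y
  refine LinearMap.ext fun z => ?_
  rw [hlam, hlam_zero, Pi.zero_apply, zero_smul, LinearMap.zero_apply]

/-- There are no non-trivial transposed Poisson algebra
structures on the Virasoro algebra. -/
theorem no_transposedPoisson_on_virasoro
    (m : Vir →ₗ[ℂ] Vir →ₗ[ℂ] Vir)
    (hcomm : ∀ x y : Vir, m x y = m y x)
    (hassoc : ∀ x y z : Vir, m (m x y) z = m x (m y z))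
    (hcompat : ∀ x y z : Vir, (2 : ℂ) • m z (virBracket x y) =
        virBracket (m z x) y + virBracket x (m z y)) :
    m = 0 :=
  no_transposedPoisson_on_virasoro_general m hcomm hcompat
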